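/- arXiv:0707.2722 — 2 statements merged into one kernel-verified Lean document; each statement's English description precedes it below -/
import Mathlib

section
/- For real numbers ξ₁, ξ₂, ξ₃, ξ₄ with ξ = ξ₁+ξ₂+ξ₃+ξ₄, the algebraic identity-based resonance bound holds: if all |ξᵢ| are comparable (say |ξᵢ| ≥ 0.99·max|ξⱼ| for all i) and at least three of the ξᵢ have the same sign, then |ξ³ - (ξ₁³+ξ₂³+ξ₃³+ξ₄³)| ≳ max(|ξ₁|³,|ξ₂|³,|ξ₃|³,|ξ₄|³), with an absolute implied constant. -/
/-!
Say `ξ₁, ξ₂, ξ₃` have the same sign, WLOG positive (the resonance is odd), and put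
`s = ξ₁ + ξ₂ + ξ₃`. Completing the square in `ξ₄`, `(s + ξ₄)³ - ξ₄³ = s³/4 + 3s(ξ₄ + s/2)² ≥ s³/4`,
whatever the size or sign of `ξ₄`. With `M = max |ξᵢ|`, comparability gives `s ≥ 3 · 0.99 M` and
`ξ₁³ + ξ₂³ + ξ₃³ ≤ 3M³`, so the resonance is at least `(27 · 0.99³ / 4 - 3) M³ ≥ M³`.
-/

namespace GKdV

def resonance (a b c d : ℝ) : ℝ :=
  (a + b + c + d) ^ 3 - (a ^ 3 + b ^ 3 + c ^ 3 + d ^ 3)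

def StrictlySameSign (a b c : ℝ) : Prop :=
  (0 < a ∧ 0 < b ∧ 0 < c) ∨ (a < 0 ∧ b < 0 ∧ c < 0)

theorem resonance_neg (a b c d : ℝ) :
    resonance (-a) (-b) (-c) (-d) = -resonance a b c d := by
  unfold resonance; ring

theorem pow_three_div_four_le_add_pow_three_sub_pow_three {s : ℝ} (hs : 0 ≤ s) (d : ℝ) :
    s ^ 3 / 4 ≤ (s + d) ^ 3 - d ^ 3 := by
  have hsq : (s + d) ^ 3 - d ^ 3 - s ^ 3 / 4 = 3 * s * (d + s / 2) ^ 2 := by ring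
  linarith [mul_nonneg (mul_nonneg zero_le_three hs) (sq_nonneg (d + s / 2))]

theorem le_resonance_of_mem_Icc {m M a b c : ℝ} (hm : 0 ≤ m)
    (ha : a ∈ Set.Icc m M) (hb : b ∈ Set.Icc m M) (hc : c ∈ Set.Icc m M) (d : ℝ) :
    27 / 4 * m ^ 3 - 3 * M ^ 3 ≤ resonance a b c d := by
  have hcube : ∀ x ∈ Set.Icc m M, x ^ 3 ≤ M ^ 3 := fun x hx =>
    pow_le_pow_left₀ (hm.trans hx.1) hx.2 3
  have hs : 3 * m ≤ a + b + c := by linarith [ha.1, hb.1, hc.1]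
  calc 27 / 4 * m ^ 3 - 3 * M ^ 3 = (3 * m) ^ 3 / 4 - 3 * M ^ 3 := by ring
    _ ≤ (a + b + c) ^ 3 / 4 - (a ^ 3 + b ^ 3 + c ^ 3) := by
      gcongr ?_ / 4 - ?_
      · gcongr
      · linarith [hcube a ha, hcube b hb, hcube c hc]
    _ ≤ (a + b + c + d) ^ 3 - d ^ 3 - (a ^ 3 + b ^ 3 + c ^ 3) := by
      linarith [pow_three_div_four_le_add_pow_three_sub_pow_three (hs.trans' (by positivity)) d]
    _ = resonance a b c d := by unfold resonance; ring

theorem le_abs_resonance_of_strictlySameSign {m M a b c : ℝ} (hm : 0 ≤ m)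
    (ha : |a| ∈ Set.Icc m M) (hb : |b| ∈ Set.Icc m M) (hc : |c| ∈ Set.Icc m M)
    (hsign : StrictlySameSign a b c) (d : ℝ) :
    27 / 4 * m ^ 3 - 3 * M ^ 3 ≤ |resonance a b c d| := by
  rcases hsign with ⟨pa, pb, pc⟩ | ⟨na, nb, nc⟩
  · rw [abs_of_pos pa] at ha
    rw [abs_of_pos pb] at hb
    rw [abs_of_pos pc] at hc
    exact (le_resonance_of_mem_Icc hm ha hb hc d).trans (le_abs_self _)
  · rw [abs_of_neg na] at ha
    rw [abs_of_neg nb] at hb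
    rw [abs_of_neg nc] at hc
    calc 27 / 4 * m ^ 3 - 3 * M ^ 3 ≤ resonance (-a) (-b) (-c) (-d) :=
          le_resonance_of_mem_Icc hm ha hb hc (-d)
      _ = -resonance a b c d := resonance_neg a b c d
      _ ≤ |resonance a b c d| := neg_le_abs _

end GKdV

/-- Resonance bound in region C: if all four frequencies are comparable
(each `|ξᵢ| ≥ 0.99 · max |ξⱼ|`) and at least three of them have the same sign,
then `|ξ³ - Σ ξᵢ³| ≳ max |ξᵢ|³` with an absolute constant. -/
theorem resonance_bound_regionC :
    ∃ c : ℝ, 0 < c ∧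
      ∀ ξ₁ ξ₂ ξ₃ ξ₄ : ℝ,
        (∀ i ∈ ({ξ₁, ξ₂, ξ₃, ξ₄} : Finset ℝ),
          0.99 * max (max |ξ₁| |ξ₂|) (max |ξ₃| |ξ₄|) ≤ |i|) →
        ((0 < ξ₁ ∧ 0 < ξ₂ ∧ 0 < ξ₃) ∨ (0 < ξ₁ ∧ 0 < ξ₂ ∧ 0 < ξ₄) ∨
         (0 < ξ₁ ∧ 0 < ξ₃ ∧ 0 < ξ₄) ∨ (0 < ξ₂ ∧ 0 < ξ₃ ∧ 0 < ξ₄) ∨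
         (ξ₁ < 0 ∧ ξ₂ < 0 ∧ ξ₃ < 0) ∨ (ξ₁ < 0 ∧ ξ₂ < 0 ∧ ξ₄ < 0) ∨
         (ξ₁ < 0 ∧ ξ₃ < 0 ∧ ξ₄ < 0) ∨ (ξ₂ < 0 ∧ ξ₃ < 0 ∧ ξ₄ < 0)) →
        c * (max (max |ξ₁| |ξ₂|) (max |ξ₃| |ξ₄|))^3 ≤
          |(ξ₁ + ξ₂ + ξ₃ + ξ₄)^3 - (ξ₁^3 + ξ₂^3 + ξ₃^3 + ξ₄^3)| := by
  refine ⟨1, one_pos, fun ξ₁ ξ₂ ξ₃ ξ₄ hcomp hsign => ?_⟩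
  set M := max (max |ξ₁| |ξ₂|) (max |ξ₃| |ξ₄|)
  have hM : 0 ≤ M := (abs_nonneg ξ₁).trans (le_max_of_le_left (le_max_left _ _))
  have hconst : M ^ 3 ≤ 27 / 4 * (0.99 * M) ^ 3 - 3 * M ^ 3 := by
    nlinarith [pow_nonneg hM 3]
  have key : ∀ a ∈ ({ξ₁, ξ₂, ξ₃, ξ₄} : Finset ℝ), ∀ b ∈ ({ξ₁, ξ₂, ξ₃, ξ₄} : Finset ℝ),
      ∀ c ∈ ({ξ₁, ξ₂, ξ₃, ξ₄} : Finset ℝ), GKdV.StrictlySameSign a b c →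
      ∀ d, M ^ 3 ≤ |GKdV.resonance a b c d| := by
    have hIcc : ∀ x ∈ ({ξ₁, ξ₂, ξ₃, ξ₄} : Finset ℝ), |x| ∈ Set.Icc (0.99 * M) M := by
      intro x hx
      refine ⟨hcomp x hx, ?_⟩
      simp only [Finset.mem_insert, Finset.mem_singleton] at hx
      rcases hx with rfl | rfl | rfl | rfl <;> simp [M]
    intro a ha b hb c hc hsame d
    exact hconst.trans (GKdV.le_abs_resonance_of_strictlySameSign (by positivity)
      (hIcc a ha) (hIcc b hb) (hIcc c hc) hsame d)
  change 1 * M ^ 3 ≤ |GKdV.resonance ξ₁ ξ₂ ξ₃ ξ₄|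
  rw [one_mul]
  obtain h | h | h | h : GKdV.StrictlySameSign ξ₁ ξ₂ ξ₃ ∨ GKdV.StrictlySameSign ξ₁ ξ₂ ξ₄ ∨
      GKdV.StrictlySameSign ξ₁ ξ₃ ξ₄ ∨ GKdV.StrictlySameSign ξ₂ ξ₃ ξ₄ := by
    unfold GKdV.StrictlySameSign
    rcases hsign with h | h | h | h | h | h | h | h <;> simp only [h, and_self, true_or, or_true]
  · exact key _ (by simp) _ (by simp) _ (by simp) h _
  · convert key _ (by simp) _ (by simp) _ (by simp) h ξ₃ using 2
    unfold GKdV.resonance; ring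
  · convert key _ (by simp) _ (by simp) _ (by simp) h ξ₂ using 2
    unfold GKdV.resonance; ring
  · convert key _ (by simp) _ (by simp) _ (by simp) h ξ₁ using 2
    unfold GKdV.resonance; ring
end

section
/- For real numbers ξ₁,…,ξ₄ with max_i|ξᵢ| ≥ 1, and either (i) min_i|ξᵢ| ≤ 0.99·max_i|ξᵢ|, or (ii) min_i|ξᵢ| > 0.99·max_i|ξᵢ| and exactly two of the ξᵢ are positive, there exists a pair of indices j ≠ k such that |ξ₁+ξ₂+ξ₃+ξ₄| ≲ |ξⱼ+ξ_k| and |ξⱼ - ξ_k| ≳ max_i|ξᵢ|, with absolute implicit constants. Consequently, writing ξ = ∑ξᵢ, |ξ| ≲ |ξ|^{1/2}|ξⱼ+ξ_k|^{1/2}|ξⱼ-ξ_k|^{1/2} ∏_{i=1}^4 ⟨ξᵢ⟩^{sᵢ} whenever sᵢ ≤ 0 and ∑sᵢ = -1/2. -/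
/-!
If some `|ξₖ|` is at most `0.99 M`, pair it with a largest entry `ξⱼ`: both `|ξⱼ ± ξₖ|` are then
at least `M / 100`, while `|∑ ξᵢ| ≤ 4M`. Otherwise all `|ξᵢ|` are comparable to `M`, and exactly
two are positive, so the four entries split into two pairs of opposite signs; the difference within
each such pair exceeds `1.98 M`, and one of the two pair sums carries at least half of `∑ ξᵢ`.

For the weighted bound, `∏ ⟨ξᵢ⟩^{sᵢ} ≥ ⟨M⟩^{-1/2} ≳ M^{-1/2}` because every `sᵢ ≤ 0`, and
`|ξⱼ - ξₖ| ≳ M` cancels this loss.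
-/

open Finset Real

section FinFour

variable {α : Type*} [LinearOrder α] (f : Fin 4 → α)

lemma le_max_max_fin_four (i : Fin 4) : f i ≤ max (max (f 0) (f 1)) (max (f 2) (f 3)) := by
  fin_cases i <;> simp

lemma exists_eq_max_max_fin_four : ∃ j, f j = max (max (f 0) (f 1)) (max (f 2) (f 3)) := by
  rcases max_choice (max (f 0) (f 1)) (max (f 2) (f 3)) with h | h <;> rw [h]
  · exact (max_choice (f 0) (f 1)).elim (fun h => ⟨0, h.symm⟩) fun h => ⟨1, h.symm⟩
  · exact (max_choice (f 2) (f 3)).elim (fun h => ⟨2, h.symm⟩) fun h => ⟨3, h.symm⟩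

lemma exists_le_of_min_min_fin_four_le {b : α}
    (h : min (min (f 0) (f 1)) (min (f 2) (f 3)) ≤ b) : ∃ k, f k ≤ b := by
  simp only [min_le_iff] at h
  rcases h with (h | h) | (h | h)
  exacts [⟨0, h⟩, ⟨1, h⟩, ⟨2, h⟩, ⟨3, h⟩]

lemma lt_of_lt_min_min_fin_four {b : α}
    (h : b < min (min (f 0) (f 1)) (min (f 2) (f 3))) (i : Fin 4) : b < f i := by
  simp only [lt_min_iff] at h
  fin_cases i <;> simp [h]

end FinFour

lemma abs_sum_le_card_mul {ι : Type*} [Fintype ι] {x : ι → ℝ} {M : ℝ} (hx : ∀ i, |x i| ≤ M) :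
    |∑ i, x i| ≤ Fintype.card ι * M := by
  calc |∑ i, x i| ≤ ∑ i, |x i| := abs_sum_le_sum_abs _ _
    _ ≤ #(univ : Finset ι) • M := sum_le_card_nsmul _ _ _ fun i _ => hx i
    _ = Fintype.card ι * M := by rw [card_univ, nsmul_eq_mul]

lemma exists_sum_eq_add_add_of_card_filter_eq_two {ι M : Type*} [Fintype ι] [DecidableEq ι]
    [AddCommMonoid M] (hι : Fintype.card ι = 4) {p : ι → Prop} [DecidablePred p]
    (hp : (univ.filter p).card = 2) (f : ι → M) :
    ∃ a₁ a₂ b₁ b₂, p a₁ ∧ p a₂ ∧ ¬p b₁ ∧ ¬p b₂ ∧ ∑ i, f i = (f a₁ + f b₁) + (f a₂ + f b₂) := by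
  have hnp : (univ.filter fun i => ¬p i).card = 2 := by
    have := card_filter_add_card_filter_not (s := univ) p
    rw [card_univ, hι, hp] at this
    omega
  obtain ⟨a₁, a₂, ha, hpa⟩ := card_eq_two.1 hp
  obtain ⟨b₁, b₂, hb, hpb⟩ := card_eq_two.1 hnp
  have mem_p : ∀ a ∈ ({a₁, a₂} : Finset ι), p a := fun a h => by
    rw [← hpa] at h; exact (mem_filter.1 h).2
  have mem_np : ∀ b ∈ ({b₁, b₂} : Finset ι), ¬p b := fun b h => by
    rw [← hpb] at h; exact (mem_filter.1 h).2
  refine ⟨a₁, a₂, b₁, b₂, mem_p _ (by simp), mem_p _ (by simp), mem_np _ (by simp),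
    mem_np _ (by simp), ?_⟩
  rw [← sum_filter_add_sum_filter_not univ p, hpa, hpb, sum_pair ha, sum_pair hb,
    add_add_add_comm]

def IsRegionBPair (C c M : ℝ) (ξ : Fin 4 → ℝ) (j k : Fin 4) : Prop :=
  j ≠ k ∧ |∑ i, ξ i| ≤ C * |ξ j + ξ k| ∧ c * M ≤ |ξ j - ξ k|

lemma isRegionBPair_of_abs_le {ξ : Fin 4 → ℝ} {M : ℝ} {j k : Fin 4} (hM : 0 < M)
    (hb : ∀ i, |ξ i| ≤ M) (hj : |ξ j| = M) (hk : |ξ k| ≤ 0.99 * M) :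
    IsRegionBPair 400 (1 / 100) M ξ j k := by
  have hgap : 1 / 100 * M ≤ |ξ j| - |ξ k| := by rw [hj]; norm_num at hk ⊢; linarith
  have hsum : |∑ i, ξ i| ≤ 4 * M := by simpa using abs_sum_le_card_mul hb
  refine ⟨?_, ?_, hgap.trans (abs_sub_abs_le_abs_sub _ _)⟩
  · rintro rfl
    linarith
  · linarith [abs_sub_abs_le_abs_add (ξ j) (ξ k)]

lemma exists_isRegionBPair_of_card_pos_eq_two {ξ : Fin 4 → ℝ} {M : ℝ} (hM : 0 < M)
    (hlow : ∀ i, 0.99 * M < |ξ i|) (hcard : (univ.filter fun i => 0 < ξ i).card = 2) :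
    ∃ j k, IsRegionBPair 400 (1 / 100) M ξ j k := by
  have opposite : ∀ a b, 0 < ξ a → ¬0 < ξ b → a ≠ b ∧ 1 / 100 * M ≤ |ξ a - ξ b| := by
    intro a b ha hb
    have hsep : |ξ a| + |ξ b| = ξ a - ξ b := by
      rw [abs_of_pos ha, abs_of_nonpos (not_lt.1 hb), sub_eq_add_neg]
    refine ⟨fun hab => hb (hab ▸ ha), ?_⟩
    calc 1 / 100 * M ≤ 0.99 * M + 0.99 * M := by norm_num; linarith
      _ ≤ |ξ a| + |ξ b| := add_le_add (hlow a).le (hlow b).le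
      _ ≤ |ξ a - ξ b| := hsep ▸ le_abs_self _
  obtain ⟨a₁, a₂, b₁, b₂, ha₁, ha₂, hb₁, hb₂, hsum⟩ :=
    exists_sum_eq_add_add_of_card_filter_eq_two (Fintype.card_fin 4) hcard ξ
  have htri := hsum ▸ abs_add_le (ξ a₁ + ξ b₁) (ξ a₂ + ξ b₂)
  rcases le_total |ξ a₁ + ξ b₁| |ξ a₂ + ξ b₂| with h | h
  · obtain ⟨hne, hdiff⟩ := opposite a₂ b₂ ha₂ hb₂
    exact ⟨a₂, b₂, hne, by linarith [abs_nonneg (ξ a₂ + ξ b₂)], hdiff⟩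
  · obtain ⟨hne, hdiff⟩ := opposite a₁ b₁ ha₁ hb₁
    exact ⟨a₁, b₁, hne, by linarith [abs_nonneg (ξ a₁ + ξ b₁)], hdiff⟩

lemma rpow_sum_le_prod_one_add_sq_rpow {ι : Type*} [Fintype ι] {x t : ι → ℝ} {M : ℝ}
    (hx : ∀ i, |x i| ≤ M) (ht : ∀ i, t i ≤ 0) :
    (1 + M ^ 2) ^ (∑ i, t i) ≤ ∏ i, (1 + x i ^ 2) ^ t i := by
  rw [rpow_sum_of_pos (by positivity)]
  refine prod_le_prod (fun _ _ => by positivity) fun i _ =>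
    rpow_le_rpow_of_nonpos (by positivity) ?_ (ht i)
  have := pow_le_pow_left₀ (abs_nonneg (x i)) (hx i) 2
  rw [sq_abs] at this
  linarith

lemma one_le_two_mul_mul_sq_rpow_neg_quarter {M : ℝ} (hM : 1 ≤ M) :
    1 ≤ 2 * M * ((1 + M ^ 2) ^ (-(1 / 4 : ℝ))) ^ 2 := by
  have hpos : 0 < 1 + M ^ 2 := by positivity
  have hsq : ((1 + M ^ 2) ^ (-(1 / 4 : ℝ))) ^ 2 = (√(1 + M ^ 2))⁻¹ := by
    rw [← rpow_natCast, ← rpow_mul hpos.le, sqrt_eq_rpow, ← rpow_neg hpos.le]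
    norm_num
  have hroot : √(1 + M ^ 2) ≤ 2 * M := sqrt_le_iff.2 ⟨by linarith, by nlinarith⟩
  rw [hsq, ← div_eq_mul_inv, le_div_iff₀ (sqrt_pos.2 hpos)]
  linarith

lemma le_mul_rpow_half_mul_rpow_half_mul_rpow_half_mul {S a d W C : ℝ} (hS : 0 ≤ S)
    (ha : 0 ≤ a) (hd : 0 ≤ d) (hW : 0 ≤ W) (hC : 0 ≤ C) (hSa : S ≤ C * a)
    (hdW : 1 ≤ C * d * W ^ 2) :
    S ≤ C * S ^ ((1 : ℝ) / 2) * a ^ ((1 : ℝ) / 2) * d ^ ((1 : ℝ) / 2) * W := by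
  rw [← sqrt_eq_rpow, ← sqrt_eq_rpow, ← sqrt_eq_rpow,
    ← pow_le_pow_iff_left₀ hS (by positivity) two_ne_zero]
  calc S ^ 2 = S * S := sq S
    _ ≤ S * (C * a) * (C * d * W ^ 2) :=
      mul_le_mul_of_nonneg_left hSa hS |>.trans (le_mul_of_one_le_right (by positivity) hdW)
    _ = (C * √S * √a * √d * W) ^ 2 := by
      simp only [mul_pow, sq_sqrt hS, sq_sqrt ha, sq_sqrt hd]
      ring

/-- Region-B combinatorial estimate: if `max_i |ξᵢ| ≥ 1` and either
(i) `min_i |ξᵢ| ≤ 0.99 max_i |ξᵢ|`, or (ii) `min_i |ξᵢ| > 0.99 max_i |ξᵢ|`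
and exactly two of the `ξᵢ` are positive, then there are indices `j ≠ k` with
`|Σξᵢ| ≲ |ξⱼ+ξₖ|` and `|ξⱼ-ξₖ| ≳ max_i |ξᵢ|` (absolute constants);
consequently `|ξ| ≤ C |ξ|^{1/2} |ξⱼ+ξₖ|^{1/2} |ξⱼ-ξₖ|^{1/2} ∏ ⟨ξᵢ⟩^{sᵢ}`
whenever `sᵢ ≤ 0` and `Σ sᵢ = -1/2`. -/
theorem regionB_pair_selection :
    ∃ C c : ℝ, 0 < C ∧ 0 < c ∧
      ∀ ξ : Fin 4 → ℝ, ∀ M : ℝ,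
        M = max (max |ξ 0| |ξ 1|) (max |ξ 2| |ξ 3|) →
        1 ≤ M →
        (min (min |ξ 0| |ξ 1|) (min |ξ 2| |ξ 3|) ≤ 0.99 * M ∨
         (0.99 * M < min (min |ξ 0| |ξ 1|) (min |ξ 2| |ξ 3|) ∧
          (univ.filter (fun i => 0 < ξ i)).card = 2)) →
        ∃ j k : Fin 4, j ≠ k ∧
          |∑ i, ξ i| ≤ C * |ξ j + ξ k| ∧
          c * M ≤ |ξ j - ξ k| ∧
          ∀ s : Fin 4 → ℝ, (∀ i, s i ≤ 0) → (∑ i, s i) = -1/2 →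
            |∑ i, ξ i| ≤ C * |∑ i, ξ i| ^ ((1:ℝ)/2) * |ξ j + ξ k| ^ ((1:ℝ)/2) *
              |ξ j - ξ k| ^ ((1:ℝ)/2) * ∏ i, (1 + (ξ i)^2) ^ (s i / 2) := by
  refine ⟨400, 1 / 100, by norm_num, by norm_num, fun ξ M hM hM1 hcase => ?_⟩
  have hM0 : 0 < M := one_pos.trans_le hM1
  have hb : ∀ i, |ξ i| ≤ M := hM ▸ le_max_max_fin_four (|ξ ·|)
  obtain ⟨j, k, hjk, hsum, hdiff⟩ : ∃ j k, IsRegionBPair 400 (1 / 100) M ξ j k := by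
    rcases hcase with hmin | ⟨hmin, hcard⟩
    · obtain ⟨j, hj⟩ := exists_eq_max_max_fin_four (|ξ ·|)
      obtain ⟨k, hk⟩ := exists_le_of_min_min_fin_four_le (|ξ ·|) hmin
      exact ⟨j, k, isRegionBPair_of_abs_le hM0 hb (hj.trans hM.symm) hk⟩
    · exact exists_isRegionBPair_of_card_pos_eq_two hM0
        (lt_of_lt_min_min_fin_four (|ξ ·|) hmin) hcard
  refine ⟨j, k, hjk, hsum, hdiff, fun s hs hs_sum => ?_⟩
  have hweight : (1 + M ^ 2) ^ (-(1 / 4 : ℝ)) ≤ ∏ i, (1 + ξ i ^ 2) ^ (s i / 2) := by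
    have := rpow_sum_le_prod_one_add_sq_rpow hb fun i =>
      div_nonpos_of_nonpos_of_nonneg (hs i) zero_le_two
    rwa [← sum_div, hs_sum, show (-1 / 2 : ℝ) / 2 = -(1 / 4) by norm_num] at this
  refine le_mul_rpow_half_mul_rpow_half_mul_rpow_half_mul (abs_nonneg _) (abs_nonneg _)
    (abs_nonneg _) (by positivity) (by norm_num) hsum ?_
  calc 1 ≤ 2 * M * ((1 + M ^ 2) ^ (-(1 / 4 : ℝ))) ^ 2 :=
        one_le_two_mul_mul_sq_rpow_neg_quarter hM1
    _ ≤ 400 * |ξ j - ξ k| * (∏ i, (1 + ξ i ^ 2) ^ (s i / 2)) ^ 2 :=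
      mul_le_mul (by linarith) (pow_le_pow_left₀ (by positivity) hweight 2) (by positivity)
        (by positivity)
end
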